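/- Let p be a prime and let n̄ ≥ 2 and r ≥ 2 be integers, and set N = n̄ + r − 1. Then the group G = G(N,N,r) satisfies: if r ≤ n̄ − 1, then G/Z(G)^p is isomorphic to G(n̄,n̄,r); and if r ≥ n̄, then G/Z(G)^p is isomorphic to the direct product of two cyclic groups of order p^{n̄}. Consequently, for each pair (n̄,r) with n̄, r ≥ 2 there is an infinite chain of powerfully nilpotent groups G(n̄ + i(r−1), n̄ + i(r−1), r), i ≥ 1, in which each group is a direct ancestor of the previous one, terminating in the abelian group C_{p^{n̄}} × C_{p^{n̄}}. -/

import Mathlib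

/-- `H.pPow k` is the subgroup generated by the `k`-th powers of the elements of `H`. -/
def Subgroup.pPow {G : Type*} [Group G] (H : Subgroup G) (k : ℕ) : Subgroup G :=
  Subgroup.closure ((fun x => x ^ k) '' (H : Set G))

/-- A `p`-group `G` is powerful if `p` is odd and `[G,G] ≤ G^p`, or `p = 2` and `[G,G] ≤ G^4`. -/
def IsPowerfulGroup (p : ℕ) (G : Type*) [Group G] : Prop :=
  IsPGroup p G ∧
    ((Odd p ∧ commutator G ≤ Subgroup.pPow ⊤ p) ∨
      (p = 2 ∧ commutator G ≤ Subgroup.pPow ⊤ 4))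

/-- A powerful `p`-group is powerfully nilpotent if it has an ascending chain of subgroups
`⊥ = H 0 ≤ H 1 ≤ ⋯ ≤ H n = ⊤` that is powerfully central, i.e. `[H (i+1), G] ≤ (H i)^p`. -/
def IsPowerfullyNilpotent (p : ℕ) (G : Type*) [Group G] : Prop :=
  IsPowerfulGroup p G ∧
    ∃ (n : ℕ) (H : ℕ → Subgroup G), H 0 = ⊥ ∧ H n = ⊤ ∧
      (∀ i < n, H i ≤ H (i + 1)) ∧
      ∀ i < n, ⁅H (i + 1), (⊤ : Subgroup G)⁆ ≤ (H i).pPow p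

open scoped commutatorElement

/-- The relations of the presentation `⟨a, b ∣ a^(p^n) = 1, b^(p^m) = 1, [a,b] = a^(p^r)⟩`. -/
def splitRels (p n m r : ℕ) : Set (FreeGroup (Fin 2)) :=
  {FreeGroup.of (0 : Fin 2) ^ p ^ n, FreeGroup.of (1 : Fin 2) ^ p ^ m,
    ⁅FreeGroup.of (0 : Fin 2), FreeGroup.of (1 : Fin 2)⁆ * (FreeGroup.of (0 : Fin 2) ^ p ^ r)⁻¹}

/-- The group `G(n,m,r) = ⟨a, b ∣ a^(p^n) = 1, b^(p^m) = 1, [a,b] = a^(p^r)⟩`. -/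
abbrev GSplit (p n m r : ℕ) : Type := PresentedGroup (splitRels p n m r)

/-- `Z(G)^p`: the subgroup generated by the `p`-th powers of the elements of the center. -/
def centerPow (p : ℕ) (G : Type*) [Group G] : Subgroup G :=
  (Subgroup.center G).pPow p

theorem centerPow_le_center (p : ℕ) (G : Type*) [Group G] :
    centerPow p G ≤ Subgroup.center G := by
  apply (Subgroup.closure_le _).mpr
  rintro x ⟨y, hy, rfl⟩
  exact pow_mem hy p

instance centerPow_normal (p : ℕ) (G : Type*) [Group G] : (centerPow p G).Normal := by
  constructor
  intro x hx g
  have hc := Subgroup.mem_center_iff.mp (centerPow_le_center p G hx)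
  have h : g * x * g⁻¹ = x := by rw [hc g, mul_inv_cancel_right]
  rw [h]; exact hx

/-!
`G(n,n,r)` is realised as the semidirect product `ℤ/p^n ⋊ ℤ/p^n` in which the generator `b` of
the right factor acts on the left factor by multiplication by `u = 1 - p^r`; by lifting the
exponent, `u` has order `p^(n-r)` in `ZMod (p^n)`. In this model:
* `(x, y)` is central iff `(u - 1) x = 0` and `u^y = 1`, i.e. iff `p^(n-r)` divides `x` and `y`;
* central elements are fixed by the action, so their `p`-th powers are `(p x, p y)`, and `Z(G)^p`
  is the kernel of the reduction of both coordinates modulo `p^(n-r+1)`, a surjection onto the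
  model of level `n-r+1`;
* the model of level `k` is abelian as soon as `k ≤ r`, because then `u ≡ 1 (mod p^k)`.
For `n = n̄ + r - 1` this gives both isomorphisms, and stepping along `n̄ + i (r - 1)` gives the
chain. Finally, the commutator of `(x, y)` with anything is `(w, 0)` where `p^(r+k)` divides `w`
whenever `p^k` divides `x` and `y`; as `r ≥ 2`, the kernels of the reductions modulo `p^(n-i)`
form a powerfully central chain.
-/

open Multiplicative

section ZModPow

lemma pow_val_natCast {M : Type*} [Monoid M] {m : ℕ} {a : M} (ha : a ^ m = 1) (k : ℕ) :
    a ^ (k : ZMod m).val = a ^ k := by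
  rw [ZMod.val_natCast, ← pow_eq_pow_mod _ ha]

lemma pow_val_one {M : Type*} [Monoid M] {m : ℕ} {a : M} (ha : a ^ m = 1) :
    a ^ (1 : ZMod m).val = a := by
  simpa using pow_val_natCast ha 1

variable {G : Type*} [Group G] {m : ℕ} [NeZero m]

def zmodPowHom (g : G) (hg : g ^ m = 1) : Multiplicative (ZMod m) →* G where
  toFun x := g ^ (toAdd x).val
  map_one' := by simp
  map_mul' x y := by
    rw [toAdd_mul, ZMod.val_add, ← pow_eq_pow_mod _ hg, pow_add]

@[simp]
lemma zmodPowHom_ofAdd (g : G) (hg : g ^ m = 1) (x : ZMod m) :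
    zmodPowHom g hg (ofAdd x) = g ^ x.val := rfl

lemma conj_eq_pow_val_of_commutatorElement_eq {a b : G} (ha : a ^ m = 1) {k : ℕ}
    (h : ⁅a, b⁆ = a ^ k) : b * a * b⁻¹ = a ^ (1 - (k : ZMod m)).val := by
  calc b * a * b⁻¹ = (a ^ k)⁻¹ * a := by rw [← h, commutatorElement_def]; group
    _ = (zmodPowHom a ha (ofAdd (k : ZMod m)))⁻¹ * zmodPowHom a ha (ofAdd 1) := by
      rw [zmodPowHom_ofAdd, zmodPowHom_ofAdd, pow_val_natCast ha, pow_val_one ha]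
    _ = zmodPowHom a ha (ofAdd (1 - (k : ZMod m))) := by
      rw [← map_inv, ← map_mul, ← ofAdd_neg, ← ofAdd_add, neg_add_eq_sub]
    _ = a ^ (1 - (k : ZMod m)).val := zmodPowHom_ofAdd a ha _

end ZModPow

section Transport

variable {G H : Type*} [Group G] [Group H]

lemma Subgroup.map_pPow (f : G →* H) (K : Subgroup G) (k : ℕ) :
    (K.pPow k).map f = (K.map f).pPow k := by
  rw [Subgroup.pPow, Subgroup.pPow, MonoidHom.map_closure, Subgroup.coe_map, Set.image_image,
    Set.image_image]
  simp only [map_pow]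

lemma Subgroup.map_equiv_center (e : G ≃* H) :
    (Subgroup.center G).map e.toMonoidHom = Subgroup.center H := by
  ext h
  rw [Subgroup.mem_map_equiv, ← SetLike.mem_coe, ← SetLike.mem_coe, Subgroup.coe_center,
    Subgroup.coe_center, ← MulEquivClass.apply_mem_center_iff e, MulEquiv.apply_symm_apply]

lemma Subgroup.map_equiv_commutator (e : G ≃* H) :
    (_root_.commutator G).map e.toMonoidHom = _root_.commutator H := by
  rw [map_commutator_eq, MonoidHom.range_eq_top.2 e.surjective, _root_.commutator_def]

lemma map_equiv_centerPow (p : ℕ) (e : G ≃* H) :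
    (centerPow p G).map e.toMonoidHom = centerPow p H := by
  rw [centerPow, centerPow, Subgroup.map_pPow, Subgroup.map_equiv_center]

def quotientCenterPowCongr (p : ℕ) (e : G ≃* H) :
    G ⧸ centerPow p G ≃* H ⧸ centerPow p H :=
  QuotientGroup.congr _ _ e (map_equiv_centerPow p e)

lemma IsPowerfulGroup.of_mulEquiv {p : ℕ} (e : G ≃* H) (h : IsPowerfulGroup p G) :
    IsPowerfulGroup p H := by
  obtain ⟨hpg, hcomm⟩ := h
  refine ⟨hpg.of_equiv e, ?_⟩
  rw [← Subgroup.map_equiv_commutator e,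
    ← Subgroup.map_top_of_surjective e.toMonoidHom e.surjective, ← Subgroup.map_pPow,
    ← Subgroup.map_pPow]
  exact hcomm.imp (And.imp_right Subgroup.map_mono) (And.imp_right Subgroup.map_mono)

lemma IsPowerfullyNilpotent.of_mulEquiv {p : ℕ} (e : G ≃* H) (h : IsPowerfullyNilpotent p G) :
    IsPowerfullyNilpotent p H := by
  obtain ⟨hpow, m, K, hbot, htop, hmono, hstep⟩ := h
  have hmap_top := Subgroup.map_top_of_surjective e.toMonoidHom e.surjective
  refine ⟨hpow.of_mulEquiv e, m, fun i => (K i).map e.toMonoidHom,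
    by simp only [hbot, Subgroup.map_bot], by simp only [htop, hmap_top],
    fun i hi => Subgroup.map_mono (hmono i hi), fun i hi => ?_⟩
  rw [← hmap_top, ← Subgroup.map_commutator, ← Subgroup.map_pPow]
  exact Subgroup.map_mono (hstep i hi)

end Transport

section SplitMetacyclic

variable {m : ℕ} [NeZero m]

def splitMetacyclicAction (u : ZMod m) (hu : u ^ m = 1) :
    Multiplicative (ZMod m) →* MulAut (Multiplicative (ZMod m)) :=
  ((MulAutMultiplicative (ZMod m)).symm.toMonoidHom.comp AddAut.mulLeft).comp
    (zmodPowHom (Units.ofPowEqOne u m hu (NeZero.ne m)) (Units.ext (by simp)))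

abbrev SplitMetacyclic (u : ZMod m) (hu : u ^ m = 1) : Type :=
  Multiplicative (ZMod m) ⋊[splitMetacyclicAction u hu] Multiplicative (ZMod m)

end SplitMetacyclic

namespace SplitMetacyclic

variable {m : ℕ} [NeZero m] {u : ZMod m} {hu : u ^ m = 1}

-- `mk x y` is `a ^ x * b ^ y` for `a = mk 1 0` and `b = mk 0 1`, and `b * a * b⁻¹ = a ^ u`.
def mk (x y : ZMod m) : SplitMetacyclic u hu := ⟨ofAdd x, ofAdd y⟩

lemma exists_eq_mk (g : SplitMetacyclic u hu) : ∃ x y, g = mk x y :=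
  ⟨toAdd g.left, toAdd g.right, rfl⟩

@[simp] lemma mk_left (x y : ZMod m) : (mk x y : SplitMetacyclic u hu).left = ofAdd x := rfl

@[simp] lemma mk_right (x y : ZMod m) : (mk x y : SplitMetacyclic u hu).right = ofAdd y := rfl

lemma mk_eq_mk_iff {x y x' y' : ZMod m} :
    (mk x y : SplitMetacyclic u hu) = mk x' y' ↔ x = x' ∧ y = y' := by
  simp [mk, SemidirectProduct.ext_iff]

lemma mk_zero_zero : (mk 0 0 : SplitMetacyclic u hu) = 1 := rfl

lemma mk_eq_one_iff {x y : ZMod m} : (mk x y : SplitMetacyclic u hu) = 1 ↔ x = 0 ∧ y = 0 := by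
  rw [← mk_zero_zero, mk_eq_mk_iff]

lemma mk_mul_mk (x y x' y' : ZMod m) :
    (mk x y : SplitMetacyclic u hu) * mk x' y' = mk (x + u ^ y.val * x') (y + y') := rfl

lemma mk_pow {x y : ZMod m} (hy : u ^ y.val = 1) (k : ℕ) :
    (mk x y : SplitMetacyclic u hu) ^ k = mk ((k : ZMod m) * x) ((k : ZMod m) * y) := by
  induction k with
  | zero => simp [mk_zero_zero]
  | succ k ih =>
    rw [pow_succ', ih, mk_mul_mk, hy, mk_eq_mk_iff]
    push_cast
    constructor <;> ring

lemma mk_zero_pow (y : ZMod m) (k : ℕ) :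
    (mk 0 y : SplitMetacyclic u hu) ^ k = mk 0 ((k : ZMod m) * y) := by
  induction k with
  | zero => simp [mk_zero_zero]
  | succ k ih =>
    rw [pow_succ, ih, mk_mul_mk, mk_eq_mk_iff]
    push_cast
    constructor <;> ring

lemma commutatorElement_mk (x y x' y' : ZMod m) :
    ⁅(mk x y : SplitMetacyclic u hu), (mk x' y' : SplitMetacyclic u hu)⁆ =
      mk ((1 - u ^ y'.val) * x + (u ^ y.val - 1) * x') 0 := by
  rw [commutatorElement_def, mul_assoc (_ * _), ← mul_inv_rev, mul_inv_eq_iff_eq_mul,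
    mk_mul_mk, mk_mul_mk, mk_mul_mk, mk_eq_mk_iff, ZMod.val_zero, pow_zero]
  constructor <;> ring

lemma mk_mem_center_iff {x y : ZMod m} :
    (mk x y : SplitMetacyclic u hu) ∈ Subgroup.center _ ↔
      (u - 1) * x = 0 ∧ u ^ y.val = 1 := by
  rw [Subgroup.mem_center_iff]
  constructor
  · intro h
    have ha := h (mk 1 0)
    have hb := h (mk 0 1)
    rw [mk_mul_mk, mk_mul_mk, mk_eq_mk_iff, ZMod.val_zero, pow_zero] at ha
    rw [mk_mul_mk, mk_mul_mk, mk_eq_mk_iff, pow_val_one hu] at hb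
    exact ⟨by linear_combination hb.1, by linear_combination -ha.1⟩
  · rintro ⟨hx, hy⟩ g
    obtain ⟨x', y', rfl⟩ := exists_eq_mk g
    obtain ⟨c, hc⟩ := sub_dvd_pow_sub_pow u 1 y'.val
    rw [one_pow] at hc
    rw [mk_mul_mk, mk_mul_mk, hy, mk_eq_mk_iff]
    constructor
    · linear_combination x * hc + c * hx
    · ring

lemma mk_one_zero_mul_mk_zero_one_ne (hu1 : u ≠ 1) :
    (mk 1 0 : SplitMetacyclic u hu) * mk 0 1 ≠ mk 0 1 * mk 1 0 := by
  rw [Ne, mk_mul_mk, mk_mul_mk, mk_eq_mk_iff, pow_val_one hu, ZMod.val_zero, pow_zero]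
  exact fun h => hu1 (by linear_combination -h.1)

lemma mk_natCast_mul_mem_pPow {K : Subgroup (SplitMetacyclic u hu)} {x : ZMod m}
    (hx : mk x 0 ∈ K) (j : ℕ) : mk ((j : ZMod m) * x) 0 ∈ K.pPow j :=
  Subgroup.subset_closure ⟨mk x 0, hx, by simpa using mk_pow (x := x) (y := 0) (by simp) j⟩

lemma card : Nat.card (SplitMetacyclic u hu) = m ^ 2 := by
  rw [Nat.card_congr SemidirectProduct.equivProd, Nat.card_prod]
  simp [sq]

def mulEquivProdOfEqOne (h1 : u = 1) :
    SplitMetacyclic u hu ≃* Multiplicative (ZMod m × ZMod m) where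
  toFun g := ofAdd (toAdd g.left, toAdd g.right)
  invFun z := mk (toAdd z).1 (toAdd z).2
  left_inv _ := rfl
  right_inv _ := rfl
  map_mul' g g' := by
    obtain ⟨x, y, rfl⟩ := exists_eq_mk g
    obtain ⟨x', y', rfl⟩ := exists_eq_mk g'
    have hy : u ^ y.val = 1 := by rw [h1, one_pow]
    rw [mk_mul_mk, hy, one_mul]
    rfl

section lift

variable {G : Type*} [Group G] {a b : G}

lemma conj_zmodPowHom (ha : a ^ m = 1) (hab : b * a * b⁻¹ = a ^ u.val) (x : ZMod m) :
    b * zmodPowHom a ha (ofAdd x) * b⁻¹ = zmodPowHom a ha (ofAdd (u * x)) := by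
  rw [zmodPowHom_ofAdd, zmodPowHom_ofAdd, ← conj_pow, hab, ← pow_mul, ZMod.val_mul,
    ← pow_eq_pow_mod _ ha]

lemma conj_pow_zmodPowHom (ha : a ^ m = 1) (hab : b * a * b⁻¹ = a ^ u.val) (k : ℕ)
    (x : ZMod m) :
    b ^ k * zmodPowHom a ha (ofAdd x) * (b ^ k)⁻¹ = zmodPowHom a ha (ofAdd (u ^ k * x)) := by
  induction k generalizing x with
  | zero => simp
  | succ k ih =>
    rw [pow_succ, pow_succ, mul_assoc _ u, ← ih, ← conj_zmodPowHom ha hab]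
    group

def lift (ha : a ^ m = 1) (hb : b ^ m = 1) (hab : b * a * b⁻¹ = a ^ u.val) :
    SplitMetacyclic u hu →* G :=
  SemidirectProduct.lift (zmodPowHom a ha) (zmodPowHom b hb) fun y => MonoidHom.ext fun x =>
    (conj_pow_zmodPowHom ha hab (toAdd y).val (toAdd x)).symm

lemma lift_mk (ha : a ^ m = 1) (hb : b ^ m = 1) (hab : b * a * b⁻¹ = a ^ u.val) (x y : ZMod m) :
    lift (hu := hu) ha hb hab (mk x y) = a ^ x.val * b ^ y.val := rfl

end lift

section reduce

variable {m' : ℕ} [NeZero m'] {u' : ZMod m'} {hu' : u' ^ m' = 1}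

def reduce (h : m' ∣ m) (huu' : ZMod.castHom h (ZMod m') u = u') :
    SplitMetacyclic u hu →* SplitMetacyclic u' hu' where
  toFun g := mk (ZMod.castHom h _ (toAdd g.left)) (ZMod.castHom h _ (toAdd g.right))
  map_one' := by
    simp only [SemidirectProduct.one_left, SemidirectProduct.one_right, toAdd_one, map_zero]
    rfl
  map_mul' g g' := by
    obtain ⟨x, y, rfl⟩ := exists_eq_mk g
    obtain ⟨x', y', rfl⟩ := exists_eq_mk g'
    have hval : u' ^ (ZMod.castHom h (ZMod m') y).val = u' ^ y.val := by
      rw [ZMod.castHom_apply, ZMod.cast_eq_val, pow_val_natCast hu']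
    simp only [mk_mul_mk, mk_left, mk_right, toAdd_ofAdd, map_add, map_mul, map_pow, huu', hval]

lemma reduce_mk (h : m' ∣ m) (huu' : ZMod.castHom h (ZMod m') u = u') (x y : ZMod m) :
    reduce (hu := hu) (hu' := hu') h huu' (mk x y) =
      mk (ZMod.castHom h _ x) (ZMod.castHom h _ y) := rfl

lemma reduce_surjective (h : m' ∣ m) (huu' : ZMod.castHom h (ZMod m') u = u') :
    Function.Surjective (reduce (hu := hu) (hu' := hu') h huu') := by
  intro g
  obtain ⟨x, y, rfl⟩ := exists_eq_mk g
  obtain ⟨x₀, rfl⟩ := ZMod.castHom_surjective h x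
  obtain ⟨y₀, rfl⟩ := ZMod.castHom_surjective h y
  exact ⟨mk x₀ y₀, rfl⟩

lemma mk_mem_ker_reduce (h : m' ∣ m) (huu' : ZMod.castHom h (ZMod m') u = u') {x y : ZMod m} :
    mk x y ∈ (reduce (hu := hu) (hu' := hu') h huu').ker ↔
      ZMod.castHom h (ZMod m') x = 0 ∧ ZMod.castHom h (ZMod m') y = 0 := by
  rw [MonoidHom.mem_ker, reduce_mk, mk_eq_one_iff]

end reduce

end SplitMetacyclic

section PrimePowerModulus

variable {p : ℕ} [NeZero p] {n k : ℕ}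

lemma ZMod.castHom_pow_eq_zero_iff_dvd_val (hk : k ≤ n) (x : ZMod (p ^ n)) :
    ZMod.castHom (pow_dvd_pow p hk) (ZMod (p ^ k)) x = 0 ↔ p ^ k ∣ x.val := by
  rw [ZMod.castHom_apply, ZMod.cast_eq_val, ZMod.natCast_eq_zero_iff]

lemma ZMod.pow_dvd_iff_dvd_val (hk : k ≤ n) (x : ZMod (p ^ n)) :
    (p : ZMod (p ^ n)) ^ k ∣ x ↔ p ^ k ∣ x.val := by
  constructor
  · rintro ⟨c, rfl⟩
    rw [← ZMod.castHom_pow_eq_zero_iff_dvd_val hk, map_mul, map_pow, map_natCast,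
      ← Nat.cast_pow, ZMod.natCast_self, zero_mul]
  · rintro ⟨c, hc⟩
    exact ⟨c, by rw [← ZMod.natCast_zmod_val x, hc]; push_cast; rfl⟩

lemma ZMod.castHom_pow_eq_zero_iff (hk : k ≤ n) (x : ZMod (p ^ n)) :
    ZMod.castHom (pow_dvd_pow p hk) (ZMod (p ^ k)) x = 0 ↔ (p : ZMod (p ^ n)) ^ k ∣ x := by
  rw [ZMod.castHom_pow_eq_zero_iff_dvd_val hk, ZMod.pow_dvd_iff_dvd_val hk]

lemma ZMod.pow_mul_eq_zero_iff (hk : k ≤ n) (x : ZMod (p ^ n)) :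
    (p : ZMod (p ^ n)) ^ k * x = 0 ↔ (p : ZMod (p ^ n)) ^ (n - k) ∣ x := by
  rw [ZMod.pow_dvd_iff_dvd_val (Nat.sub_le n k), ← ZMod.natCast_zmod_val x, ← Nat.cast_pow,
    ← Nat.cast_mul, ZMod.natCast_eq_zero_iff, ZMod.val_natCast_of_lt (ZMod.val_lt x)]
  have h := Nat.mul_dvd_mul_iff_left (b := p ^ (n - k)) (c := x.val)
    (pow_pos (Nat.pos_of_ne_zero (NeZero.ne p)) k)
  rwa [← pow_add, Nat.add_sub_cancel' hk] at h

end PrimePowerModulus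

section OneSubPrimePow

variable {p r : ℕ}

lemma pow_dvd_one_sub_pow_pow_sub_one {R : Type*} [CommRing R] (hp : p.Prime) (hr : 2 ≤ r)
    {k j : ℕ} (hj : p ^ k ∣ j) : (p : R) ^ (r + k) ∣ (1 - (p : R) ^ r) ^ j - 1 := by
  obtain ⟨j, rfl⟩ := hj
  have hrp : r + 2 ≤ r * p := by nlinarith [hp.two_le]
  obtain ⟨y, hy⟩ := ZMod.exists_one_add_mul_pow_prime_pow_eq (u := (p : R) ^ r) (v := p) hp
    (dvd_pow_self _ (by omega))
    (by rw [mul_comm _ ((p : R) ^ r), mul_assoc, ← sq, ← pow_add, ← pow_mul]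
        exact pow_dvd_pow _ hrp) (-1) k
  have hpk : (1 - (p : R) ^ r) ^ p ^ k - 1 = (p : R) ^ (r + k) * (p * y - 1) := by
    rw [sub_eq_add_neg (1 : R), ← mul_neg_one, hy, pow_add]
    ring
  rw [pow_mul]
  exact (Dvd.intro _ hpk.symm).trans
    (by simpa using sub_dvd_pow_sub_pow ((1 - (p : R) ^ r) ^ p ^ k) 1 j)

variable [Fact p.Prime]

lemma orderOf_one_sub_pow (hr : 2 ≤ r) {n : ℕ} (hrn : r ≤ n) :
    orderOf (1 - (p : ZMod (p ^ n)) ^ r) = p ^ (n - r) := by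
  have hp : p.Prime := Fact.out
  obtain ⟨d, rfl⟩ := Nat.exists_eq_add_of_le' hrn
  have hrp : r + 2 ≤ p * r := by nlinarith [hp.two_le]
  have := ZMod.orderOf_one_add_mul_prime_pow hp r (by omega) hrp (-1)
    (by rw [Int.dvd_neg, Int.natCast_dvd_ofNat, Nat.dvd_one]; exact hp.ne_one) d
  simpa [sub_eq_add_neg] using this

lemma one_sub_pow_pow_eq_one (hr : 2 ≤ r) (n : ℕ) :
    (1 - (p : ZMod (p ^ n)) ^ r) ^ p ^ n = 1 := by
  obtain ⟨c, hc⟩ :=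
    pow_dvd_one_sub_pow_pow_sub_one (R := ZMod (p ^ n)) Fact.out hr (dvd_refl (p ^ n))
  rw [← sub_eq_zero, hc, pow_add, ← Nat.cast_pow p n, ZMod.natCast_self, mul_zero, zero_mul]

lemma one_sub_pow_ne_one {n : ℕ} (hrn : r < n) : 1 - (p : ZMod (p ^ n)) ^ r ≠ 1 := by
  rw [Ne, sub_eq_self, ← Nat.cast_pow, ZMod.natCast_eq_zero_iff,
    Nat.pow_dvd_pow_iff_le_right (Fact.out : p.Prime).one_lt]
  omega

end OneSubPrimePow

abbrev MetacyclicModel (p : ℕ) [Fact p.Prime] {r : ℕ} (hr : 2 ≤ r) (n : ℕ) : Type :=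
  SplitMetacyclic (1 - (p : ZMod (p ^ n)) ^ r) (one_sub_pow_pow_eq_one hr n)

namespace MetacyclicModel

open SplitMetacyclic

variable {p : ℕ} [Fact p.Prime] {r : ℕ} {hr : 2 ≤ r} {n k : ℕ}

variable (p hr) in
def reduce (hk : k ≤ n) : MetacyclicModel p hr n →* MetacyclicModel p hr k :=
  SplitMetacyclic.reduce (pow_dvd_pow p hk) (by rw [map_sub, map_one, map_pow, map_natCast])

lemma mk_mem_ker_reduce_iff (hk : k ≤ n) {x y : ZMod (p ^ n)} :
    mk x y ∈ (reduce p hr hk).ker ↔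
      (p : ZMod (p ^ n)) ^ k ∣ x ∧ (p : ZMod (p ^ n)) ^ k ∣ y := by
  rw [reduce, mk_mem_ker_reduce, ZMod.castHom_pow_eq_zero_iff hk, ZMod.castHom_pow_eq_zero_iff hk]

lemma center_eq (hk : k ≤ n) (hkr : k + r = n) :
    Subgroup.center (MetacyclicModel p hr n) = (reduce p hr hk).ker := by
  ext g
  obtain ⟨x, y, rfl⟩ := exists_eq_mk g
  have hnr : n - r = k := by omega
  rw [mk_mem_center_iff, mk_mem_ker_reduce_iff]
  refine and_congr ?_ ?_
  · rw [sub_sub_cancel_left, neg_mul, neg_eq_zero, ZMod.pow_mul_eq_zero_iff (by omega), hnr]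
  · rw [← orderOf_dvd_iff_pow_eq_one, orderOf_one_sub_pow hr (by omega), hnr,
      ZMod.pow_dvd_iff_dvd_val hk]

lemma centerPow_eq (hk : k ≤ n) (hkr : k + r = n + 1) (hrn : r ≤ n) :
    centerPow p (MetacyclicModel p hr n) = (reduce p hr hk).ker := by
  obtain ⟨j, rfl⟩ : ∃ j, k = j + 1 := ⟨k - 1, by omega⟩
  have hcenter := center_eq (p := p) (hr := hr) (by omega : j ≤ n) (by omega)
  apply le_antisymm
  · rw [centerPow, Subgroup.pPow, Subgroup.closure_le]
    rintro _ ⟨g, hg, rfl⟩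
    obtain ⟨x, y, rfl⟩ := exists_eq_mk g
    have hfix := (mk_mem_center_iff.1 hg).2
    rw [SetLike.mem_coe, hcenter, mk_mem_ker_reduce_iff] at hg
    dsimp only
    rw [SetLike.mem_coe, mk_pow hfix, mk_mem_ker_reduce_iff, pow_succ']
    exact ⟨mul_dvd_mul_left _ hg.1, mul_dvd_mul_left _ hg.2⟩
  · intro g hg
    obtain ⟨x, y, rfl⟩ := exists_eq_mk g
    obtain ⟨⟨c, rfl⟩, ⟨d, rfl⟩⟩ := (mk_mem_ker_reduce_iff hk).1 hg
    have hcentral : (mk ((p : ZMod (p ^ n)) ^ j * c) ((p : ZMod (p ^ n)) ^ j * d) :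
        MetacyclicModel p hr n) ∈ Subgroup.center _ := by
      rw [hcenter, mk_mem_ker_reduce_iff]
      exact ⟨dvd_mul_right _ _, dvd_mul_right _ _⟩
    refine Subgroup.subset_closure ⟨_, hcentral, ?_⟩
    dsimp only
    rw [mk_pow (mk_mem_center_iff.1 hcentral).2, pow_succ', mul_assoc, mul_assoc]

noncomputable def quotientCenterPowEquiv (hk : k ≤ n) (hkr : k + r = n + 1) (hrn : r ≤ n) :
    MetacyclicModel p hr n ⧸ centerPow p (MetacyclicModel p hr n) ≃* MetacyclicModel p hr k :=
  (QuotientGroup.quotientMulEquivOfEq (centerPow_eq hk hkr hrn)).trans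
    (QuotientGroup.quotientKerEquivOfSurjective _ (reduce_surjective _ _))

def mulEquivProdOfLE (hnr : n ≤ r) :
    MetacyclicModel p hr n ≃* Multiplicative (ZMod (p ^ n) × ZMod (p ^ n)) :=
  mulEquivProdOfEqOne (by
    rw [← Nat.cast_pow, (ZMod.natCast_eq_zero_iff _ _).2 (pow_dvd_pow p hnr), sub_zero])

lemma exists_commutatorElement_eq (hk : k ≤ n) {x y : ZMod (p ^ n)}
    (hx : (p : ZMod (p ^ n)) ^ k ∣ x) (hy : (p : ZMod (p ^ n)) ^ k ∣ y)
    (h : MetacyclicModel p hr n) :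
    ∃ t, ⁅(mk x y : MetacyclicModel p hr n), h⁆ =
      mk ((p : ZMod (p ^ n)) ^ (k + 2) * t) 0 := by
  obtain ⟨x', y', rfl⟩ := exists_eq_mk h
  have hp : p.Prime := Fact.out
  have hx' : (p : ZMod (p ^ n)) ^ r ∣ 1 - (1 - (p : ZMod (p ^ n)) ^ r) ^ y'.val := by
    rw [dvd_sub_comm, ← add_zero r]
    exact pow_dvd_one_sub_pow_pow_sub_one hp hr (by rw [pow_zero]; exact one_dvd _)
  have hy' : (p : ZMod (p ^ n)) ^ (r + k) ∣ (1 - (p : ZMod (p ^ n)) ^ r) ^ y.val - 1 :=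
    pow_dvd_one_sub_pow_pow_sub_one hp hr ((ZMod.pow_dvd_iff_dvd_val hk y).1 hy)
  obtain ⟨t, ht⟩ := (pow_dvd_pow (p : ZMod (p ^ n)) (by omega : k + 2 ≤ r + k)).trans
    (dvd_add (pow_add (p : ZMod (p ^ n)) r k ▸ mul_dvd_mul hx' hx) (hy'.mul_right x'))
  exact ⟨t, by rw [commutatorElement_mk, ht]⟩

lemma isPowerfulGroup : IsPowerfulGroup p (MetacyclicModel p hr n) := by
  have hp : p.Prime := Fact.out
  refine ⟨IsPGroup.of_card (n := n * 2) (by rw [card, ← pow_mul]), ?_⟩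
  have hcomm (g h : MetacyclicModel p hr n) :
      ∃ t, ⁅g, h⁆ = mk ((p : ZMod (p ^ n)) ^ 2 * t) 0 := by
    obtain ⟨x, y, rfl⟩ := exists_eq_mk g
    simpa using exists_commutatorElement_eq (Nat.zero_le n) (by simp) (by simp) h
  have hpow (j : ℕ) (t : ZMod (p ^ n)) :
      (mk ((j : ZMod (p ^ n)) * t) 0 : MetacyclicModel p hr n) ∈ (⊤ : Subgroup _).pPow j :=
    mk_natCast_mul_mem_pPow (Subgroup.mem_top _) j
  rw [commutator_def]
  rcases hp.eq_two_or_odd' with rfl | hodd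
  · refine Or.inr ⟨rfl, Subgroup.commutator_le.2 fun g _ h _ => ?_⟩
    obtain ⟨t, ht⟩ := hcomm g h
    rw [ht, show ((2 : ℕ) : ZMod (2 ^ n)) ^ 2 = (4 : ℕ) by norm_num]
    exact hpow 4 t
  · refine Or.inl ⟨hodd, Subgroup.commutator_le.2 fun g _ h _ => ?_⟩
    obtain ⟨t, ht⟩ := hcomm g h
    rw [ht, sq, mul_assoc]
    exact hpow p _

lemma isPowerfullyNilpotent : IsPowerfullyNilpotent p (MetacyclicModel p hr n) := by
  refine ⟨isPowerfulGroup, n, fun i => (reduce p hr (Nat.sub_le n i)).ker, ?_, ?_, ?_, ?_⟩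
  · refine (Subgroup.eq_bot_iff_forall _).2 fun g hg => ?_
    obtain ⟨x, y, rfl⟩ := exists_eq_mk g
    rw [mk_mem_ker_reduce_iff, Nat.sub_zero, ← Nat.cast_pow, ZMod.natCast_self, zero_dvd_iff,
      zero_dvd_iff] at hg
    rw [hg.1, hg.2, mk_zero_zero]
  · refine (Subgroup.eq_top_iff' _).2 fun g => ?_
    obtain ⟨x, y, rfl⟩ := exists_eq_mk g
    rw [mk_mem_ker_reduce_iff, Nat.sub_self, pow_zero]
    exact ⟨one_dvd x, one_dvd y⟩
  · intro i _ g hg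
    obtain ⟨x, y, rfl⟩ := exists_eq_mk g
    have hdvd := pow_dvd_pow (p : ZMod (p ^ n)) (Nat.sub_le_sub_left (Nat.le_succ i) n)
    rw [mk_mem_ker_reduce_iff] at hg ⊢
    exact ⟨hdvd.trans hg.1, hdvd.trans hg.2⟩
  · intro i hi
    refine Subgroup.commutator_le.2 fun g hg h _ => ?_
    obtain ⟨x, y, rfl⟩ := exists_eq_mk g
    rw [mk_mem_ker_reduce_iff] at hg
    obtain ⟨t, ht⟩ := exists_commutatorElement_eq (Nat.sub_le n (i + 1)) hg.1 hg.2 h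
    rw [ht, show n - (i + 1) + 2 = n - i + 1 by omega, pow_succ', mul_assoc]
    refine mk_natCast_mul_mem_pPow ?_ p
    rw [mk_mem_ker_reduce_iff]
    exact ⟨dvd_mul_right _ _, dvd_zero _⟩

end MetacyclicModel

namespace GSplit

open PresentedGroup SplitMetacyclic

section relations

variable {p n m r : ℕ}

lemma of_zero_pow : (of 0 : GSplit p n m r) ^ p ^ n = 1 := by
  rw [of, ← map_pow]
  exact one_of_mem (Set.mem_insert _ _)

lemma of_one_pow : (of 1 : GSplit p n m r) ^ p ^ m = 1 := by
  rw [of, ← map_pow]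
  exact one_of_mem (Set.mem_insert_of_mem _ (Set.mem_insert _ _))

lemma commutatorElement_of :
    ⁅(of 0 : GSplit p n m r), (of 1 : GSplit p n m r)⁆ = of 0 ^ p ^ r := by
  rw [of, of, ← map_commutatorElement, ← map_pow]
  exact mk_eq_mk_of_mul_inv_mem (Set.mem_insert_of_mem _ (Set.mem_insert_of_mem _ rfl))

end relations

variable (p : ℕ) [Fact p.Prime] {r : ℕ} (hr : 2 ≤ r) (n : ℕ)

def toModel : GSplit p n n r →* MetacyclicModel p hr n :=
  toGroup (f := ![mk 1 0, mk 0 1]) (by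
    simp only [splitRels, Set.mem_insert_iff, Set.mem_singleton_iff]
    rintro _ (rfl | rfl | rfl) <;>
      simp only [map_pow, map_mul, map_inv, map_commutatorElement, FreeGroup.lift_apply_of,
        Matrix.cons_val_zero, Matrix.cons_val_one]
    · rw [mk_pow (by simp), ZMod.natCast_self, zero_mul, zero_mul, mk_zero_zero]
    · rw [mk_zero_pow, ZMod.natCast_self, zero_mul, mk_zero_zero]
    · rw [commutatorElement_mk, mk_pow (by simp), mul_inv_eq_one,
        pow_val_one (one_sub_pow_pow_eq_one hr n)]
      simp)

noncomputable def equivModel : GSplit p n n r ≃* MetacyclicModel p hr n :=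
  MonoidHom.toMulEquiv (toModel p hr n)
    (lift (hu := one_sub_pow_pow_eq_one hr n) of_zero_pow of_one_pow
      (by simpa using conj_eq_pow_val_of_commutatorElement_eq of_zero_pow commutatorElement_of))
    (ext fun i => by
      fin_cases i <;> simp [lift_mk, toModel, pow_val_one of_zero_pow, pow_val_one of_one_pow])
    (MonoidHom.ext fun g => by
      obtain ⟨x, y, rfl⟩ := exists_eq_mk g
      simp [lift_mk, toModel, mk_pow, mk_zero_pow, mk_mul_mk])

variable {p n}

noncomputable def quotientCenterPowEquiv {k : ℕ} (hk : k ≤ n) (hkr : k + r = n + 1)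
    (hrn : r ≤ n) : GSplit p n n r ⧸ centerPow p (GSplit p n n r) ≃* MetacyclicModel p hr k :=
  (quotientCenterPowCongr p (equivModel p hr n)).trans
    (MetacyclicModel.quotientCenterPowEquiv hk hkr hrn)

end GSplit

lemma GSplit.of_zero_mul_of_one_ne {p : ℕ} [Fact p.Prime] {r n : ℕ} (hr : 2 ≤ r)
    (hrn : r < n) :
    (PresentedGroup.of 0 : GSplit p n n r) * PresentedGroup.of 1 ≠
      PresentedGroup.of 1 * PresentedGroup.of 0 := fun h =>
  SplitMetacyclic.mk_one_zero_mul_mk_zero_one_ne (one_sub_pow_ne_one hrn)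
    (by simpa [GSplit.toModel] using congrArg (GSplit.toModel p hr n) h)

/-- For `n̄, r ≥ 2` and `N = n̄ + r - 1`, the group `G = G(N,N,r)` satisfies:
if `r ≤ n̄ - 1` then `G/Z(G)^p ≅ G(n̄,n̄,r)`, and if `r ≥ n̄` then `G/Z(G)^p` is the direct
product of two cyclic groups of order `p^n̄`.  Consequently the groups
`G(n̄ + i(r-1), n̄ + i(r-1), r)`, `i ≥ 1`, form an infinite chain of powerfully nilpotent
groups in which each group is a direct ancestor of the previous one. -/
theorem infinite_branches_of_ancestry_tree
    (p : ℕ) (hp : p.Prime) (nb r : ℕ) (hnb : 2 ≤ nb) (hr : 2 ≤ r) :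
    (r + 1 ≤ nb →
      Nonempty ((GSplit p (nb + r - 1) (nb + r - 1) r ⧸
          centerPow p (GSplit p (nb + r - 1) (nb + r - 1) r)) ≃* GSplit p nb nb r)) ∧
    (nb ≤ r →
      Nonempty ((GSplit p (nb + r - 1) (nb + r - 1) r ⧸
          centerPow p (GSplit p (nb + r - 1) (nb + r - 1) r)) ≃*
        Multiplicative (ZMod (p ^ nb) × ZMod (p ^ nb)))) ∧
    (∀ i : ℕ, 1 ≤ i →
      IsPowerfullyNilpotent p
        (GSplit p (nb + i * (r - 1)) (nb + i * (r - 1)) r) ∧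
      (¬∀ x y : GSplit p (nb + (i + 1) * (r - 1)) (nb + (i + 1) * (r - 1)) r,
        x * y = y * x) ∧
      Nonempty ((GSplit p (nb + (i + 1) * (r - 1)) (nb + (i + 1) * (r - 1)) r ⧸
          centerPow p (GSplit p (nb + (i + 1) * (r - 1)) (nb + (i + 1) * (r - 1)) r)) ≃*
        GSplit p (nb + i * (r - 1)) (nb + i * (r - 1)) r)) := by
  have := Fact.mk hp
  refine ⟨fun _ => ⟨(GSplit.quotientCenterPowEquiv hr (by omega) (by omega) (by omega)).trans
      (GSplit.equivModel p hr nb).symm⟩,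
    fun hnbr => ⟨(GSplit.quotientCenterPowEquiv hr (by omega) (by omega) (by omega)).trans
      (MetacyclicModel.mulEquivProdOfLE hnbr)⟩,
    fun i _ => ?_⟩
  have hsucc : (i + 1) * (r - 1) = i * (r - 1) + (r - 1) := add_one_mul i (r - 1)
  exact ⟨MetacyclicModel.isPowerfullyNilpotent.of_mulEquiv (GSplit.equivModel p hr _).symm,
    fun h => GSplit.of_zero_mul_of_one_ne hr (by omega) (h _ _),
    ⟨(GSplit.quotientCenterPowEquiv hr (by omega) (by omega) (by omega)).trans
      (GSplit.equivModel p hr _).symm⟩⟩
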